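/- Ratio bound for negative arguments (Lemma B.4): Let γ* > 0. Define t_+ = (3/2)γ* + (1/γ*) log(1 − √(1 − e^{−γ*})) and t_− = (3/2)γ* + (1/γ*) log(1 + √(1 − e^{−γ*})), let k = e^{−(1/2)(t_− − 2γ*)² + (1/2)(t_+ − 2γ*)²} and c = k/(1+k). Define h̃(x) = ( Φ(t_− − x) − Φ(t_−) ) / ( Φ(t_+ − x) − Φ(t_+) ) for x < 0, where Φ is the standard normal CDF. Then h̃(x) ≤ c/(1−c) for all x < 0. -/

import Mathlib

open MeasureTheory Set

/-- `Φ`, the standard normal CDF. -/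
noncomputable def stdNormCDF (t : ℝ) : ℝ :=
  ∫ x in Set.Iic t, Real.exp (-(x ^ 2) / 2) / Real.sqrt (2 * Real.pi)

noncomputable def stdPDF (x : ℝ) : ℝ := Real.exp (-(x ^ 2) / 2) / Real.sqrt (2 * Real.pi)

lemma stdPDF_cont : Continuous stdPDF := by
  unfold stdPDF; fun_prop

lemma stdPDF_pos (x : ℝ) : 0 < stdPDF x :=
  div_pos (Real.exp_pos _) (Real.sqrt_pos.2 (by positivity))

lemma stdPDF_integrable : Integrable stdPDF := by
  have h : Integrable (fun x : ℝ => Real.exp (-(1/2 : ℝ) * x ^ 2)) :=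
    integrable_exp_neg_mul_sq (by norm_num)
  have h2 := h.div_const (Real.sqrt (2 * Real.pi))
  refine h2.congr (Filter.Eventually.of_forall fun x => ?_)
  unfold stdPDF
  ring_nf

lemma cdf_sub (a b : ℝ) : stdNormCDF b - stdNormCDF a = ∫ x in a..b, stdPDF x :=
  intervalIntegral.integral_Iic_sub_Iic stdPDF_integrable.integrableOn stdPDF_integrable.integrableOn

/-- Ratio bound for negative arguments (Lemma B.4). -/
theorem ratio_bound_negative (γs : ℝ) (hγ : 0 < γs) :
    let tp : ℝ := 3 / 2 * γs + 1 / γs * Real.log (1 - Real.sqrt (1 - Real.exp (-γs)))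
    let tm : ℝ := 3 / 2 * γs + 1 / γs * Real.log (1 + Real.sqrt (1 - Real.exp (-γs)))
    let k : ℝ := Real.exp (-(1 / 2) * (tm - 2 * γs) ^ 2 + (1 / 2) * (tp - 2 * γs) ^ 2)
    let c : ℝ := k / (1 + k)
    ∀ x : ℝ, x < 0 →
      (stdNormCDF (tm - x) - stdNormCDF tm) / (stdNormCDF (tp - x) - stdNormCDF tp) ≤
        c / (1 - c) := by
  intro tp tm k c x hx
  have hk : 0 < k := Real.exp_pos _
  -- c/(1-c) = k
  have hcc : c / (1 - c) = k := by
    have h1 : (0:ℝ) < 1 + k := by linarith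
    show (k / (1+k)) / (1 - k / (1+k)) = k
    rw [div_eq_iff]
    · field_simp
      ring
    · intro h
      have : 1 - k / (1+k) = 1 / (1+k) := by field_simp; ring
      rw [this] at h
      exact absurd h (by positivity)
  rw [hcc]
  -- t_+ ≤ t_-
  set u : ℝ := Real.sqrt (1 - Real.exp (-γs)) with hu
  have hu0 : 0 ≤ u := Real.sqrt_nonneg _
  have hu1 : u ≤ 1 := by rw [show (1:ℝ) = Real.sqrt 1 from (Real.sqrt_one).symm]; exact Real.sqrt_le_sqrt (by have := (Real.exp_pos (-γs)).le; linarith)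
  have hlogm : Real.log (1 - u) ≤ 0 := Real.log_nonpos (by linarith) (by linarith)
  have hlogp : 0 ≤ Real.log (1 + u) := Real.log_nonneg (by linarith)
  have hd : 0 ≤ tm - tp := by
    have : tm - tp = 1 / γs * (Real.log (1 + u) - Real.log (1 - u)) := by
      show (3/2 * γs + 1/γs * Real.log (1+u)) - (3/2 * γs + 1/γs * Real.log (1-u)) = _
      ring
    rw [this]
    exact mul_nonneg (by positivity) (by linarith)
  -- pointwise bound
  have key : ∀ y : ℝ, tp ≤ y → stdPDF (y + (tm - tp)) ≤ k * stdPDF y := by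
    intro y hy
    have hexp : Real.exp (-((y + (tm - tp)) ^ 2) / 2) ≤
        Real.exp (-(1 / 2) * (tm - 2 * γs) ^ 2 + (1 / 2) * (tp - 2 * γs) ^ 2)
          * Real.exp (-(y ^ 2) / 2) := by
      rw [← Real.exp_add, Real.exp_le_exp]
      have H : ∀ T P Y : ℝ, P ≤ Y → 0 ≤ T - P →
          -(Y + (T - P)) ^ 2 / 2 ≤
            -(1 / 2) * (T - 2 * γs) ^ 2 + 1 / 2 * (P - 2 * γs) ^ 2 + -Y ^ 2 / 2 := by
        intro T P Y h1 h2
        nlinarith [mul_nonneg (sub_nonneg.2 h1) h2, mul_nonneg hγ.le h2]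
      exact H tm tp y hy hd
    show Real.exp (-((y + (tm - tp)) ^ 2) / 2) / Real.sqrt (2 * Real.pi) ≤
        k * (Real.exp (-(y ^ 2) / 2) / Real.sqrt (2 * Real.pi))
    rw [← mul_div_assoc]
    exact (div_le_div_iff_of_pos_right (Real.sqrt_pos.2 (by positivity))).mpr hexp
  -- rewrite numerator and denominator
  have hN : stdNormCDF (tm - x) - stdNormCDF tm = ∫ s in (0:ℝ)..(-x), stdPDF (s + tm) := by
    rw [cdf_sub, intervalIntegral.integral_comp_add_right, zero_add, neg_add_eq_sub]
  have hD : stdNormCDF (tp - x) - stdNormCDF tp = ∫ s in (0:ℝ)..(-x), stdPDF (s + tp) := by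
    rw [cdf_sub, intervalIntegral.integral_comp_add_right, zero_add, neg_add_eq_sub]
  rw [hN, hD]
  have hint1 : IntervalIntegrable (fun s => stdPDF (s + tm)) volume 0 (-x) :=
    (stdPDF_cont.comp (continuous_id.add continuous_const)).intervalIntegrable _ _
  have hint2 : IntervalIntegrable (fun s => stdPDF (s + tp)) volume 0 (-x) :=
    (stdPDF_cont.comp (continuous_id.add continuous_const)).intervalIntegrable _ _
  have hDpos : 0 < ∫ s in (0:ℝ)..(-x), stdPDF (s + tp) :=
    intervalIntegral.intervalIntegral_pos_of_pos hint2 (fun s => stdPDF_pos _) (by linarith)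
  rw [div_le_iff₀ hDpos]
  have hmono : (∫ s in (0:ℝ)..(-x), stdPDF (s + tm)) ≤
      ∫ s in (0:ℝ)..(-x), k * stdPDF (s + tp) := by
    apply intervalIntegral.integral_mono_on (by linarith) hint1 (hint2.const_mul k)
    intro s hs
    have := key (s + tp) (by linarith [hs.1])
    calc stdPDF (s + tm) = stdPDF (s + tp + (tm - tp)) := by ring_nf
      _ ≤ k * stdPDF (s + tp) := this
  calc (∫ s in (0:ℝ)..(-x), stdPDF (s + tm)) ≤ ∫ s in (0:ℝ)..(-x), k * stdPDF (s + tp) := hmono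
    _ = k * ∫ s in (0:ℝ)..(-x), stdPDF (s + tp) := intervalIntegral.integral_const_mul _ _
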